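/- Let R be a ring and (A, B) a duality pair (with respect to the character dual) such that both A ⊆ Mod-R and B ⊆ Mod-R° are definable. Then A = B^d, B = A^d, and the duality pair is symmetric. -/

import Mathlib

open CategoryTheory CategoryTheory.Limits

universe u

namespace Paper

/-- The abelian group `ℚ/ℤ`. -/
abbrev QmodZ : Type := AddCircle (1 : ℚ)

section Classes

variable {C : Type (u+1)} [Category.{u} C]

/-- A class of objects is closed under retracts (direct summands). -/
def ClosedUnderRetracts (A : Set C) : Prop :=
  ∀ ⦃X : C⦄, X ∈ A → ∀ ⦃Y : C⦄, (∃ (s : Y ⟶ X) (r : X ⟶ Y), s ≫ r = 𝟙 Y) → Y ∈ A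

/-- A class of objects is closed under finite direct sums. -/
def ClosedUnderFiniteCoproducts (A : Set C) : Prop :=
  ∀ ⦃X Y : C⦄, X ∈ A → Y ∈ A → ∀ c : BinaryCofan X Y, Nonempty (IsColimit c) → c.pt ∈ A

/-- A class of objects is closed under set-indexed products. -/
def ClosedUnderProducts (A : Set C) : Prop :=
  ∀ ⦃α : Type u⦄ (X : α → C), (∀ a, X a ∈ A) → ∀ c : Fan X, Nonempty (IsLimit c) → c.pt ∈ A

/-- A class of objects is closed under set-indexed coproducts. -/
def ClosedUnderCoproducts (A : Set C) : Prop :=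
  ∀ ⦃α : Type u⦄ (X : α → C), (∀ a, X a ∈ A) → ∀ c : Cofan X, Nonempty (IsColimit c) → c.pt ∈ A

/-- A class of objects is closed under isomorphisms. -/
def ClosedUnderIso (A : Set C) : Prop :=
  ∀ ⦃X : C⦄, X ∈ A → ∀ ⦃Y : C⦄, Nonempty (X ≅ Y) → Y ∈ A

end Classes

variable (R : Type u) [Ring R]

/-- The contravariant (right) module structure on the character dual
`M⁺ = Hom_ℤ(M, ℚ/ℤ)` of a left `R`-module `M`: `(r • f)(m) = f(r • m)`. -/
instance charModuleLeft (M : Type u) [AddCommGroup M] [Module R M] :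
    Module Rᵐᵒᵖ (M →+ QmodZ) where
  smul r f := f.comp (DistribMulAction.toAddMonoidHom M r.unop)
  one_smul f := by ext m; show f _ = f m; simp
  mul_smul r s f := by
    ext m
    show f ((r * s).unop • m) = f (s.unop • r.unop • m)
    rw [MulOpposite.unop_mul, mul_smul]
  smul_zero r := by ext m; rfl
  smul_add r f g := by ext m; rfl
  add_smul r s f := by
    ext m
    show f ((r + s).unop • m) = f (r.unop • m) + f (s.unop • m)
    rw [MulOpposite.unop_add, add_smul, map_add]
  zero_smul f := by ext m; show f _ = 0; simp

/-- The left module structure on the character dual `N⁺ = Hom_ℤ(N, ℚ/ℤ)` of a right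
`R`-module (i.e. a left `Rᵐᵒᵖ`-module) `N`: `(r • f)(n) = f(n • r)`. -/
instance charModuleRight (N : Type u) [AddCommGroup N] [Module Rᵐᵒᵖ N] :
    Module R (N →+ QmodZ) where
  smul r f := f.comp (DistribMulAction.toAddMonoidHom N (MulOpposite.op r))
  one_smul f := by ext m; show f _ = f m; simp
  mul_smul r s f := by
    ext m
    show f (MulOpposite.op (r * s) • m) = f (MulOpposite.op s • MulOpposite.op r • m)
    rw [MulOpposite.op_mul, mul_smul]
  smul_zero r := by ext m; rfl
  smul_add r f g := by ext m; rfl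
  add_smul r s f := by
    ext m
    show f (MulOpposite.op (r + s) • m) = f (MulOpposite.op r • m) + f (MulOpposite.op s • m)
    rw [MulOpposite.op_add, add_smul, map_add]
  zero_smul f := by ext m; show f _ = 0; simp

/-- The character dual `M⁺ = Hom_ℤ(M, ℚ/ℤ)` of a left `R`-module, as a right `R`-module
(i.e. a module over the opposite ring `R°`). -/
def charDualL (M : ModuleCat.{u} R) : ModuleCat.{u} Rᵐᵒᵖ :=
  ModuleCat.of Rᵐᵒᵖ (M →+ QmodZ)

/-- The character dual `N⁺ = Hom_ℤ(N, ℚ/ℤ)` of a right `R`-module, as a left `R`-module. -/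
def charDualR (N : ModuleCat.{u} Rᵐᵒᵖ) : ModuleCat.{u} R :=
  ModuleCat.of R (N →+ QmodZ)

/-- A submodule `N ≤ M` is *pure* if every finite system of linear equations with
constants in `N` which is solvable in `M` is solvable in `N`. -/
def IsPureSubmodule {M : Type u} [AddCommGroup M] [Module R M] (N : Submodule R M) : Prop :=
  ∀ (k n : ℕ) (a : Matrix (Fin k) (Fin n) R) (b : Fin k → N),
    (∃ x : Fin n → M, ∀ i, (∑ j, a i j • x j) = (b i : M)) →
    ∃ y : Fin n → N, ∀ i, (∑ j, a i j • ((y j : M))) = (b i : M)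

/-- A class of `R`-modules is *definable* if it is the kernel of a set of finitely
presented functors `(mod-R, Ab)`; equivalently, if it is closed under direct limits,
direct products and pure submodules (and isomorphisms). -/
structure IsDefinableClass (D : Set (ModuleCat.{u} R)) : Prop where
  iso_closed : ClosedUnderIso D
  products_closed : ClosedUnderProducts D
  dirlim_closed : ∀ (J : Type u) [SmallCategory J] [IsFiltered J]
    (F : J ⥤ ModuleCat.{u} R) (c : Cocone F),
      Nonempty (IsColimit c) → (∀ j, F.obj j ∈ D) → c.pt ∈ D
  pure_closed : ∀ ⦃M : ModuleCat.{u} R⦄, M ∈ D → ∀ N : Submodule R M,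
    IsPureSubmodule R N → ModuleCat.of R N ∈ D

/-- A pair of classes `(A, B)` of left `S`-modules and left `S'`-modules is a
*duality pair* with respect to a dualising operation `Q` if `M ∈ A ↔ Q M ∈ B` and `B` is
closed under finite direct sums and direct summands. -/
def IsModDualityPair {S S' : Type u} [Ring S] [Ring S']
    (Q : ModuleCat.{u} S → ModuleCat.{u} S')
    (A : Set (ModuleCat.{u} S)) (B : Set (ModuleCat.{u} S')) : Prop :=
  (∀ M, M ∈ A ↔ Q M ∈ B) ∧ ClosedUnderFiniteCoproducts B ∧ ClosedUnderRetracts B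

/-- A duality pair `(A, B)` (w.r.t. the character duals) is *symmetric* if `(B, A)` is
also a duality pair. -/
def IsModSymmetricDualityPair (A : Set (ModuleCat.{u} R)) (B : Set (ModuleCat.{u} Rᵐᵒᵖ)) :
    Prop :=
  IsModDualityPair (charDualL R) A B ∧ IsModDualityPair (charDualR R) B A

/-- The *dual definable category* `D^d = Ker(δ(S_D))` of a definable class `D ⊆ Mod-R`;
by Auslander-Gruson-Jensen duality it is characterised by: `N ∈ D^d` iff `N⁺ ∈ D`. -/
def dualDefinableL (D : Set (ModuleCat.{u} R)) : Set (ModuleCat.{u} Rᵐᵒᵖ) :=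
  {N | charDualR R N ∈ D}

/-- The dual definable category of a definable class of right `R`-modules. -/
def dualDefinableR (E : Set (ModuleCat.{u} Rᵐᵒᵖ)) : Set (ModuleCat.{u} R) :=
  {M | charDualL R M ∈ E}

end Paper

namespace Paper



section CharTools
variable {A B : Type*} [AddCommGroup A] [AddCommGroup B]

/-- ℚ/ℤ is a cogenerator. -/
lemma exists_char_ne {a : A} (ha : a ≠ 0) : ∃ f : A →+ QmodZ, f a ≠ 0 :=
  CharacterModule.exists_character_apply_ne_zero_of_ne_zero ha

lemma char_ext {a : A} (h : ∀ f : A →+ QmodZ, f a = 0) : a = 0 :=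
  CharacterModule.eq_zero_of_character_apply h

/-- Extension along an injective map (injectivity of ℚ/ℤ). -/
lemma char_extend (i : A →+ B) (hi : Function.Injective i) (f : A →+ QmodZ) :
    ∃ g : B →+ QmodZ, ∀ a, g (i a) = f a := by
  obtain ⟨g, hg⟩ := CharacterModule.dual_surjective_of_injective
    (R := ℤ) i.toIntLinearMap hi f
  exact ⟨g, fun a => DFunLike.congr_fun hg a⟩

/-- Factorization through a map whose kernel is annihilated. -/
lemma char_factor (u : A →+ B) (f : A →+ QmodZ) (hf : ∀ a, u a = 0 → f a = 0) :
    ∃ g : B →+ QmodZ, ∀ a, g (u a) = f a := by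
  have hker : u.ker ≤ f.ker := fun a haa => hf a haa
  let fbar : A ⧸ u.ker →+ QmodZ := QuotientAddGroup.lift u.ker f hker
  let e : A ⧸ u.ker ≃+ u.range := QuotientAddGroup.quotientKerEquivRange u
  let h : ↥u.range →+ QmodZ := fbar.comp (e.symm : ↥u.range ≃+ A ⧸ u.ker).toAddMonoidHom
  obtain ⟨g, hg⟩ := char_extend u.range.subtype Subtype.val_injective h
  refine ⟨g, fun a => ?_⟩
  have h1 : (⟨u a, ⟨a, rfl⟩⟩ : ↥u.range) = e (QuotientAddGroup.mk a) := by
    apply Subtype.ext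
    rfl
  have := hg ⟨u a, ⟨a, rfl⟩⟩
  simp only [AddSubgroup.coe_subtype] at this
  rw [this, h1]
  show fbar (e.symm (e _)) = f a
  rw [e.symm_apply_apply]
  rfl

/-- Separation from a subgroup. -/
lemma char_sep (S : AddSubgroup A) {a : A} (ha : a ∉ S) :
    ∃ f : A →+ QmodZ, (∀ s ∈ S, f s = 0) ∧ f a ≠ 0 := by
  have h0 : (QuotientAddGroup.mk a : A ⧸ S) ≠ 0 := by
    simpa [QuotientAddGroup.eq_zero_iff] using ha
  obtain ⟨c, hc⟩ := exists_char_ne h0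
  refine ⟨c.comp (QuotientAddGroup.mk' S), fun s hs => ?_, hc⟩
  have : (QuotientAddGroup.mk s : A ⧸ S) = 0 := (QuotientAddGroup.eq_zero_iff s).mpr hs
  show c (QuotientAddGroup.mk s) = 0
  rw [this, map_zero]

end CharTools


section FiniteDuality

/-- The `n`-torsion character `k ↦ k/n` of `ZMod n`. -/
noncomputable def zmodChar (n : ℕ) (hn : 0 < n) : ZMod n →+ QmodZ :=
  ZMod.lift n ⟨(zmultiplesHom QmodZ) (↑((n : ℚ)⁻¹) : QmodZ), by
    show (n : ℤ) • (↑((n : ℚ)⁻¹) : QmodZ) = 0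
    rw [← AddCircle.coe_zsmul]
    have : ((n : ℤ) : ℚ) * (n : ℚ)⁻¹ = 1 := by
      rw [Int.cast_natCast]
      exact mul_inv_cancel₀ (Nat.cast_ne_zero.mpr hn.ne')
    show (↑((n : ℤ) • ((n:ℚ)⁻¹)) : QmodZ) = 0
    rw [zsmul_eq_mul, this]
    exact AddCircle.coe_period 1⟩

lemma zmodChar_intCast (n : ℕ) (hn : 0 < n) (m : ℤ) :
    zmodChar n hn ((m : ZMod n)) = (↑((m : ℚ) * (n : ℚ)⁻¹) : QmodZ) := by
  show (ZMod.lift n _) ((m : ZMod n)) = _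
  rw [ZMod.lift_coe]
  show (m : ℤ) • (↑((n:ℚ)⁻¹) : QmodZ) = _
  rw [← AddCircle.coe_zsmul, zsmul_eq_mul]

lemma zmodChar_injective (n : ℕ) (hn : 0 < n) : Function.Injective (zmodChar n hn) := by
  rw [injective_iff_map_eq_zero]
  intro k hk
  obtain ⟨m, rfl⟩ := ZMod.intCast_surjective (n := n) k
  rw [zmodChar_intCast n hn m] at hk
  rw [AddCircle.coe_eq_zero_iff] at hk
  obtain ⟨z, hz⟩ := hk
  rw [ZMod.intCast_zmod_eq_zero_iff_dvd]
  refine ⟨z, ?_⟩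
  have hne : (n : ℚ) ≠ 0 := Nat.cast_ne_zero.mpr hn.ne'
  have : (m : ℚ) = (z : ℚ) * n := by
    have := hz
    rw [zsmul_eq_mul, mul_one] at this
    field_simp at this ⊢
    linarith [this]
  have : (m : ℚ) = ((n * z : ℤ) : ℚ) := by push_cast; linarith [this]
  exact_mod_cast this

/-- Characters of `ZMod n` biject with `ZMod n`. -/
noncomputable def zmodCharEquiv (n : ℕ) (hn : 0 < n) : ZMod n ≃ (ZMod n →+ QmodZ) := by
  haveI : NeZero n := ⟨hn.ne'⟩
  refine Equiv.ofBijective (fun k => AddMonoidHom.comp (zmodChar n hn) (AddMonoidHom.mulLeft k))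
    ⟨?_, ?_⟩
  · intro k l h
    have := DFunLike.congr_fun h (1 : ZMod n)
    simpa using zmodChar_injective n hn (by simpa [mul_one] using this)
  · intro f
    -- f is determined by f 1, which is n-torsion, hence in the image of zmodChar
    have h1 : (n : ℤ) • f 1 = 0 := by
      rw [← map_zsmul]
      have : ((n : ℤ) • (1 : ZMod n)) = 0 := by
        simp [ZMod.natCast_self]
      rw [this, map_zero]
    -- f 1 lies in the torsion; find k with zmodChar k = f 1
    obtain ⟨q, hq⟩ : ∃ q : ℚ, (↑q : QmodZ) = f 1 := Quotient.exists_rep (f 1)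
    have hq2 : (↑((n : ℤ) • q) : QmodZ) = 0 := by
      rw [AddCircle.coe_zsmul, hq]; exact h1
    rw [AddCircle.coe_eq_zero_iff] at hq2
    obtain ⟨z, hz⟩ := hq2
    have hne : (n : ℚ) ≠ 0 := Nat.cast_ne_zero.mpr hn.ne'
    have hqz : q = (z : ℚ) * (n:ℚ)⁻¹ := by
      rw [zsmul_eq_mul, mul_one, zsmul_eq_mul] at hz
      push_cast at hz
      field_simp
      linarith [hz]
    refine ⟨(z : ZMod n), ?_⟩
    ext k
    obtain ⟨m, rfl⟩ := ZMod.intCast_surjective (n := n) k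
    show zmodChar n hn ((z : ZMod n) * (m : ZMod n)) = f (m : ZMod n)
    have : ((z : ZMod n) * (m : ZMod n)) = ((z * m : ℤ) : ZMod n) := by push_cast; ring
    rw [this, zmodChar_intCast]
    have : f ((m : ZMod n)) = (m : ℤ) • f 1 := by
      rw [← map_zsmul]
      congr 1
      simp [zsmul_eq_mul]
    rw [this, ← hq, ← AddCircle.coe_zsmul, zsmul_eq_mul, hqz]
    push_cast
    congr 1
    ring

end FiniteDuality
section FiniteDuality2
variable {T : Type*} [AddCommGroup T]

/-- Precomposition equivalence of character groups. -/
def charCongr {A B : Type*} [AddCommGroup A] [AddCommGroup B] (e : A ≃+ B) :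
    (A →+ T) ≃ (B →+ T) where
  toFun f := f.comp e.symm.toAddMonoidHom
  invFun g := g.comp e.toAddMonoidHom
  left_inv f := by ext a; simp
  right_inv g := by ext b; simp

def dsumCharEquiv {ι : Type*} [DecidableEq ι] (β : ι → Type*) [∀ i, AddCommGroup (β i)] :
    ((DirectSum ι β) →+ T) ≃ ∀ i, (β i →+ T) where
  toFun F i := F.comp (DirectSum.of β i)
  invFun f := DirectSum.toAddMonoid f
  left_inv F := by
    refine DirectSum.addHom_ext fun i x => ?_
    simp [DirectSum.toAddMonoid_of]
  right_inv f := by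
    funext i; ext x
    simp [DirectSum.toAddMonoid_of]

lemma char_finite_equiv (A : Type*) [AddCommGroup A] [Finite A] :
    Nonempty ((A →+ QmodZ) ≃ A) := by
  classical
  obtain ⟨ι, hι, n, hn, ⟨e⟩⟩ := AddCommGroup.equiv_directSum_zmod_of_finite' A
  refine ⟨((charCongr e).trans (dsumCharEquiv _)).trans ?_⟩
  refine (Equiv.piCongrRight fun i => (zmodCharEquiv (n i) (by have := hn i; omega)).symm).trans ?_
  exact (DFinsupp.equivFunOnFintype.symm.trans e.symm.toEquiv)

lemma ev_finite_surjective (A : Type*) [AddCommGroup A] [Finite A]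
    (Ψ : (A →+ QmodZ) →+ QmodZ) : ∃ a : A, ∀ c : A →+ QmodZ, Ψ c = c a := by
  classical
  obtain ⟨e1⟩ := char_finite_equiv A
  haveI : Finite (A →+ QmodZ) := Finite.of_equiv A e1.symm
  obtain ⟨e2⟩ := char_finite_equiv (A →+ QmodZ)
  haveI : Finite ((A →+ QmodZ) →+ QmodZ) := Finite.of_equiv _ e2.symm
  haveI := Fintype.ofFinite A
  haveI := Fintype.ofFinite (A →+ QmodZ)
  haveI := Fintype.ofFinite ((A →+ QmodZ) →+ QmodZ)
  let ev : A →+ ((A →+ QmodZ) →+ QmodZ) :=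
    { toFun := fun a => AddMonoidHom.mk' (fun c => c a) (fun c c' => rfl)
      map_zero' := by ext c; simp
      map_add' := fun a b => by ext c; simp }
  have hinj : Function.Injective ev := by
    intro a b hab
    have hz : ∀ c : A →+ QmodZ, c (a - b) = 0 := fun c => by
      have := DFunLike.congr_fun hab c
      simp only [ev, AddMonoidHom.mk'_apply, AddMonoidHom.coe_mk, ZeroHom.coe_mk] at this
      simp [map_sub, this]
    have := char_ext hz
    rwa [sub_eq_zero] at this
  have hcard : Fintype.card A = Fintype.card ((A →+ QmodZ) →+ QmodZ) := by
    rw [Fintype.card_congr e2, Fintype.card_congr e1]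
  have hbij : Function.Bijective ev :=
    (Fintype.bijective_iff_injective_and_card ev).mpr ⟨hinj, hcard⟩
  obtain ⟨a, ha⟩ := hbij.2 Ψ
  exact ⟨a, fun c => by rw [← ha]; rfl⟩

end FiniteDuality2

section Covering
open scoped Pointwise

lemma covering_lemma {W : Type*} [AddCommGroup W] {ι : Type*} (G : AddSubgroup W)
    (t : Finset ι) (H : ι → AddSubgroup W)
    (cov : (G : Set W) ⊆ ⋃ i ∈ t, (H i : Set W))
    (Bf : (W →+ QmodZ) →+ QmodZ)
    (hBf : ∀ f : W →+ QmodZ, (∀ w ∈ G, f w = 0) → Bf f = 0) :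
    ∃ i ∈ t, ∀ f : W →+ QmodZ, (∀ w ∈ H i, f w = 0) → Bf f = 0 := by
  classical
  set H' : ι → AddSubgroup ↥G := fun i => (H i).addSubgroupOf G with hH'
  have hcov' : ⋃ i ∈ t, ((0 : ↥G) +ᵥ (H' i : Set ↥G)) = Set.univ := by
    ext g
    simp only [Set.mem_univ, iff_true, Set.mem_iUnion, zero_vadd]
    have := cov g.2
    rw [Set.mem_iUnion₂] at this
    obtain ⟨i, hi, hgi⟩ := this
    exact ⟨i, hi, (AddSubgroup.mem_addSubgroupOf).mpr hgi⟩
  have filtered := AddSubgroup.leftCoset_cover_filter_FiniteIndex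
    (H := H') (g := fun _ => (0 : ↥G)) (s := t) hcov'
  set t' := t.filter (fun i => (H' i).FiniteIndex) with ht'
  set K : AddSubgroup ↥G := ⨅ i ∈ t', H' i with hK
  have hKfi : K.FiniteIndex :=
    AddSubgroup.finiteIndex_iInf' _ (fun i hi => (Finset.mem_filter.mp hi).2)
  haveI : Finite (↥G ⧸ K) := by
    have h0 : K.index ≠ 0 := hKfi.index_ne_zero
    rw [AddSubgroup.index] at h0
    exact (Nat.card_ne_zero.mp h0).2
  -- choice of extensions of characters of G to W
  have hext : ∀ h : ↥G →+ QmodZ, ∃ g : W →+ QmodZ, ∀ x : ↥G, g ↑x = h x := fun h =>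
    char_extend G.subtype Subtype.val_injective h
  choose Ext hExt using hext
  have wd : ∀ f f' : W →+ QmodZ, (∀ x : ↥G, f ↑x = f' ↑x) → Bf f = Bf f' := by
    intro f f' h
    have h2 : Bf (f - f') = 0 := hBf _ (fun w hw => by
      have := h ⟨w, hw⟩
      simp only [AddMonoidHom.sub_apply]
      rw [sub_eq_zero]
      exact this)
    rw [map_sub, sub_eq_zero] at h2
    exact h2
  let θ : ((↥G ⧸ K) →+ QmodZ) →+ QmodZ :=
    AddMonoidHom.mk' (fun c => Bf (Ext (c.comp (QuotientAddGroup.mk' K))))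
      (fun c c' => by
        rw [← map_add]
        apply wd
        intro x
        rw [AddMonoidHom.add_apply, hExt, hExt, hExt]
        rfl)
  obtain ⟨q0, hq0⟩ := ev_finite_surjective _ θ
  obtain ⟨g0, rfl⟩ := QuotientAddGroup.mk'_surjective K q0
  have hg0 : ∃ i ∈ t', g0 ∈ H' i := by
    have hmem : g0 ∈ ⋃ i ∈ t', ((0 : ↥G) +ᵥ (H' i : Set ↥G)) := filtered ▸ Set.mem_univ g0
    rw [Set.mem_iUnion₂] at hmem
    obtain ⟨i, hi, hgi⟩ := hmem
    rw [zero_vadd] at hgi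
    exact ⟨i, hi, hgi⟩
  obtain ⟨i0, hi0t', hg0i0⟩ := hg0
  refine ⟨i0, (Finset.mem_filter.mp hi0t').1, ?_⟩
  intro f hf
  have hKle : K ≤ H' i0 := iInf₂_le i0 hi0t'
  have hker : K ≤ (f.comp G.subtype).ker := by
    intro x hx
    have : (↑x : W) ∈ H i0 := (AddSubgroup.mem_addSubgroupOf).mp (hKle hx)
    exact hf ↑x this
  set c : (↥G ⧸ K) →+ QmodZ := QuotientAddGroup.lift K (f.comp G.subtype) hker with hc
  have h1 : Bf f = θ c := by
    apply wd
    intro x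
    rw [hExt]
    rfl
  rw [h1, hq0]
  have : c ((QuotientAddGroup.mk' K) g0) = f ↑g0 := rfl
  rw [this]
  exact hf ↑g0 ((AddSubgroup.mem_addSubgroupOf).mp hg0i0)

end Covering

section Key
variable {R : Type u} [Ring R] {N : Type u} [AddCommGroup N] [Module Rᵐᵒᵖ N]

-- Notation: D1 = N⁺ (an R-module via charModuleRight), D2 = N⁺⁺ (an Rᵐᵒᵖ-module)
local notation "D1" => (N →+ QmodZ)
local notation "D2" => ((N →+ QmodZ) →+ QmodZ)

lemma d1_smul_apply (r : R) (f : D1) (x : N) : (r • f) x = f (MulOpposite.op r • x) := rfl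
lemma d2_smul_apply (ρ : Rᵐᵒᵖ) (φ : D2) (f : D1) : (ρ • φ) f = φ (ρ.unop • f) := rfl

lemma d1_unop_smul_apply (ρ : Rᵐᵒᵖ) (f : D1) (x : N) : (ρ.unop • f) x = f (ρ • x) := by
  rw [d1_smul_apply, MulOpposite.op_unop]

lemma hom_sum_apply {β T : Type*} [AddCommGroup β] [AddCommGroup T] {γ : Type*} (S : Finset γ)
    (F : γ → (β →+ T)) (x : β) : (∑ i ∈ S, F i) x = ∑ i ∈ S, F i x := by
  simp

lemma sum_apply_single {k : ℕ} {V T : Type*} [AddCommGroup V] [AddCommGroup T]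
    (F : Fin k → (V →+ T)) (i : Fin k) (x : V) :
    ∑ i', F i' ((Pi.single (M := fun _ => V) i x) i') = F i x := by
  rw [Finset.sum_eq_single i]
  · rw [Pi.single_eq_same]
  · intro i' _ hne
    rw [Pi.single_eq_of_ne hne, map_zero]
  · intro h; exact absurd (Finset.mem_univ i) h

lemma sum_smul_single {k : ℕ} {S V : Type*} [Ring S] [AddCommGroup V] [Module S V]
    (c : Fin k → S) (i : Fin k) (x : V) :
    ∑ i', c i' • ((Pi.single (M := fun _ => V) i x) i') = c i • x := by
  rw [Finset.sum_eq_single i]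
  · rw [Pi.single_eq_same]
  · intro i' _ hne
    rw [Pi.single_eq_of_ne hne, smul_zero]
  · intro h; exact absurd (Finset.mem_univ i) h

/-- The key realization lemma: a finite fragment of the quantifier-free type of a tuple in the
double character dual `N⁺⁺`, together with finitely many negated pp-formulas, can be realized
by a tuple in `N` itself. -/
theorem key_realization (s : ℕ) (b : Fin s → D2)
    {ι : Type*} [Fintype ι] (cE : ι → Fin s → Rᵐᵒᵖ)
    (hE : ∀ e : ι, ∑ i, cE e i • b i = 0)
    {τ : Type*} [Fintype τ] (kk nn : τ → ℕ)
    (aa : ∀ t, Matrix (Fin (kk t)) (Fin (nn t)) Rᵐᵒᵖ) (sel : ∀ t, Fin (kk t) → Fin s)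
    (hT : ∀ t, ¬ ∃ x : Fin (nn t) → D2, ∀ i, ∑ j, aa t i j • x j = b (sel t i)) :
    ∃ m : Fin s → N, (∀ e, ∑ i, cE e i • m i = 0) ∧
      ∀ t, ¬ ∃ x : Fin (nn t) → N, ∀ i, ∑ j, aa t i j • x j = m (sel t i) := by
  classical
  by_contra hcon
  push_neg at hcon
  -- the subgroups of W = N^s
  let G : AddSubgroup (Fin s → N) :=
    { carrier := {m | ∀ e, ∑ i, cE e i • m i = 0}
      add_mem' := by
        intro m m' hm hm' e
        have h1 : ∀ i : Fin s, cE e i • (m + m') i = cE e i • m i + cE e i • m' i :=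
          fun i => by rw [Pi.add_apply, smul_add]
        rw [Finset.sum_congr rfl (fun i _ => h1 i), Finset.sum_add_distrib, hm e, hm' e,
          add_zero]
      zero_mem' := by
        intro e
        exact Finset.sum_eq_zero fun i _ => by rw [Pi.zero_apply, smul_zero]
      neg_mem' := by
        intro m hm e
        have h1 : ∀ i : Fin s, cE e i • (-m) i = -(cE e i • m i) :=
          fun i => by rw [Pi.neg_apply, smul_neg]
        rw [Finset.sum_congr rfl (fun i _ => h1 i), Finset.sum_neg_distrib, hm e, neg_zero] }
  let H : τ → AddSubgroup (Fin s → N) := fun t =>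
    { carrier := {m | ∃ x : Fin (nn t) → N, ∀ i, ∑ j, aa t i j • x j = m (sel t i)}
      add_mem' := by
        rintro m m' ⟨x, hx⟩ ⟨x', hx'⟩
        refine ⟨x + x', fun i => ?_⟩
        have h1 : ∀ j, aa t i j • (x + x') j = aa t i j • x j + aa t i j • x' j :=
          fun j => by rw [Pi.add_apply, smul_add]
        rw [Finset.sum_congr rfl (fun j _ => h1 j), Finset.sum_add_distrib, hx i, hx' i,
          Pi.add_apply]
      zero_mem' := by
        refine ⟨0, fun i => ?_⟩
        rw [show ((0 : Fin s → N)) (sel t i) = 0 from rfl]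
        exact Finset.sum_eq_zero fun j _ => by rw [Pi.zero_apply, smul_zero]
      neg_mem' := by
        rintro m ⟨x, hx⟩
        refine ⟨-x, fun i => ?_⟩
        have h1 : ∀ j, aa t i j • (-x) j = -(aa t i j • x j) :=
          fun j => by rw [Pi.neg_apply, smul_neg]
        rw [Finset.sum_congr rfl (fun j _ => h1 j), Finset.sum_neg_distrib, hx i,
          Pi.neg_apply] }
  have cov : (G : Set (Fin s → N)) ⊆ ⋃ t ∈ (Finset.univ : Finset τ), (H t : Set (Fin s → N)) := by
    intro m hm
    obtain ⟨t, x, hx⟩ := hcon m hm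
    exact Set.mem_biUnion (Finset.mem_univ t) ⟨x, hx⟩
  -- the functional induced by b
  let sing : ∀ i : Fin s, N →+ (Fin s → N) := fun i => AddMonoidHom.single (fun _ => N) i
  have sing_apply : ∀ (i : Fin s) (x : N), sing i x = Pi.single i x := fun _ _ => rfl
  let Bf : ((Fin s → N) →+ QmodZ) →+ QmodZ :=
    AddMonoidHom.mk' (fun f => ∑ i, b i (f.comp (sing i))) (fun f f' => by
      simp only [AddMonoidHom.add_comp, map_add, Finset.sum_add_distrib])
  -- Claim 1 : Bf kills the annihilator of G
  have hBf : ∀ f : (Fin s → N) →+ QmodZ, (∀ w ∈ G, f w = 0) → Bf f = 0 := by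
    intro f hf
    let u : (Fin s → N) →+ (ι → N) := AddMonoidHom.mk' (fun m e => ∑ i, cE e i • m i) (fun m m' => by
      funext e
      simp only [Pi.add_apply, smul_add, Finset.sum_add_distrib])
    obtain ⟨g, hg⟩ := char_factor u f (fun w hw => hf w (fun e => by
      have := congrFun hw e; exact this))
    have hcomp : ∀ i : Fin s, f.comp (sing i)
        = ∑ e : ι, ((cE e i).unop • g.comp (AddMonoidHom.single (fun _ => N) e)) := by
      intro i
      ext x
      rw [hom_sum_apply]
      have h1 : (f.comp (sing i)) x = g (u (sing i x)) := (hg _).symm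
      rw [h1]
      have h2 : u (sing i x) = fun e => cE e i • x := by
        funext e
        show ∑ i', cE e i' • (sing i x) i' = _
        rw [sing_apply]
        exact sum_smul_single _ i x
      rw [h2]
      have h3 : ∀ e : ι, ((cE e i).unop • g.comp (AddMonoidHom.single (fun _ => N) e)) x
          = g (Pi.single e (cE e i • x)) := by
        intro e
        rw [d1_unop_smul_apply]
        rfl
      calc g (fun e => cE e i • x) = g (∑ e, Pi.single e (cE e i • x)) := by
            rw [Finset.univ_sum_single]
        _ = ∑ e, g (Pi.single e (cE e i • x)) := map_sum g _ _
        _ = ∑ e, ((cE e i).unop • g.comp (AddMonoidHom.single (fun _ => N) e)) x := by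
            simp only [h3]
    show ∑ i, b i (f.comp (sing i)) = 0
    calc ∑ i, b i (f.comp (sing i))
        = ∑ i, ∑ e, (cE e i • b i) (g.comp (AddMonoidHom.single (fun _ => N) e)) := by
          refine Finset.sum_congr rfl fun i _ => ?_
          rw [hcomp i, map_sum]
          exact Finset.sum_congr rfl fun e _ => rfl
      _ = ∑ e, ∑ i, (cE e i • b i) (g.comp (AddMonoidHom.single (fun _ => N) e)) :=
          Finset.sum_comm
      _ = ∑ e : ι, (∑ i, cE e i • b i) (g.comp (AddMonoidHom.single (fun _ => N) e)) := by
          refine Finset.sum_congr rfl fun e _ => ?_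
          rw [hom_sum_apply]
      _ = 0 := by simp [hE]
  obtain ⟨t0, _, ht0⟩ := covering_lemma G Finset.univ H cov Bf hBf
  -- Claim 2 : produce a solution in D2 for the system t0, contradicting hT
  apply hT t0
  let α' : (Fin (kk t0) → D1) →+ (Fin (nn t0) → D1) :=
    AddMonoidHom.mk' (fun g j => ∑ i, (aa t0 i j).unop • g i) (fun g g' => by
      funext j
      simp only [Pi.add_apply, smul_add, Finset.sum_add_distrib])
  let that : (Fin (kk t0) → D1) →+ QmodZ :=
    AddMonoidHom.mk' (fun g => ∑ i, b (sel t0 i) (g i)) (fun g g' => by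
      simp only [Pi.add_apply, map_add, Finset.sum_add_distrib])
  have hkill : ∀ g, α' g = 0 → that g = 0 := by
    intro g hg0
    let fg : (Fin s → N) →+ QmodZ := AddMonoidHom.mk' (fun m => ∑ i, g i (m (sel t0 i))) (fun m m' => by
      simp only [Pi.add_apply, map_add, Finset.sum_add_distrib])
    have hfgH : ∀ w ∈ H t0, fg w = 0 := by
      rintro w ⟨x, hx⟩
      show ∑ i, g i (w (sel t0 i)) = 0
      calc ∑ i, g i (w (sel t0 i)) = ∑ i, ∑ j, g i (aa t0 i j • x j) := by
            refine Finset.sum_congr rfl fun i _ => ?_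
            rw [← hx i, map_sum]
        _ = ∑ j, ∑ i, ((aa t0 i j).unop • g i) (x j) := by
            rw [Finset.sum_comm]
            exact Finset.sum_congr rfl fun j _ => Finset.sum_congr rfl fun i _ =>
              (d1_unop_smul_apply _ _ _).symm
        _ = ∑ j, (α' g j) (x j) := by
            refine Finset.sum_congr rfl fun j _ => ?_
            rw [show α' g j = ∑ i, (aa t0 i j).unop • g i from rfl, hom_sum_apply]
        _ = 0 := by
            rw [hg0]
            simp
    have hBfg : Bf fg = that g := by
      show ∑ i', b i' (fg.comp (sing i')) = ∑ i, b (sel t0 i) (g i)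
      have hcomp : ∀ i' : Fin s, fg.comp (sing i')
          = ∑ i, if sel t0 i = i' then g i else 0 := by
        intro i'
        ext x
        rw [hom_sum_apply]
        show ∑ i, g i ((sing i' x) (sel t0 i)) = _
        refine Finset.sum_congr rfl fun i _ => ?_
        rw [sing_apply, Pi.single_apply]
        rw [apply_ite (g i), map_zero]
        by_cases h : sel t0 i = i' <;> simp [h]
      calc ∑ i', b i' (fg.comp (sing i'))
          = ∑ i', ∑ i, if sel t0 i = i' then b i' (g i) else 0 := by
            refine Finset.sum_congr rfl fun i' _ => ?_
            rw [hcomp i', map_sum]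
            refine Finset.sum_congr rfl fun i _ => ?_
            rw [apply_ite (b i'), map_zero]
        _ = ∑ i, ∑ i', if sel t0 i = i' then b i' (g i) else 0 := Finset.sum_comm
        _ = ∑ i, b (sel t0 i) (g i) := by
            refine Finset.sum_congr rfl fun i _ => ?_
            rw [Finset.sum_ite_eq]
            simp
    rw [← hBfg]
    exact ht0 fg hfgH
  obtain ⟨xt, hxt⟩ := char_factor α' that hkill
  refine ⟨fun j => xt.comp (AddMonoidHom.single (fun _ => (N →+ QmodZ)) j), fun i => ?_⟩
  ext g0
  rw [hom_sum_apply]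
  have h1 : ∀ j, (aa t0 i j • xt.comp (AddMonoidHom.single (fun _ => (N →+ QmodZ)) j)) g0
      = xt (Pi.single j ((aa t0 i j).unop • g0)) := fun j => rfl
  simp only [h1]
  rw [← map_sum, Finset.univ_sum_single (f := fun j => (aa t0 i j).unop • g0)]
  have h2 : α' (Pi.single (M := fun _ => (N →+ QmodZ)) i g0) = fun j => (aa t0 i j).unop • g0 := by
    funext j
    exact sum_smul_single (fun i' => (aa t0 i' j).unop) i g0
  rw [← h2, hxt]
  exact sum_apply_single (fun i' => b (sel t0 i')) i g0

end Key

section Ev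
variable {R : Type u} [Ring R] {N : Type u} [AddCommGroup N] [Module Rᵐᵒᵖ N]

/-- Evaluation into the double character dual, as an `Rᵐᵒᵖ`-linear map. -/
def evalDD : N →ₗ[Rᵐᵒᵖ] ((N →+ QmodZ) →+ QmodZ) where
  toFun x := AddMonoidHom.mk' (fun h => h x) (fun h h' => rfl)
  map_add' x y := by
    ext h
    show h (x + y) = h x + h y
    exact map_add h x y
  map_smul' ρ x := by
    ext h
    show h (ρ • x) = (ρ • (AddMonoidHom.mk' (fun h : (N →+ QmodZ) => h x) (fun h h' => rfl) :
      ((N →+ QmodZ) →+ QmodZ))) h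
    rw [d2_smul_apply]
    show h (ρ • x) = (ρ.unop • h) x
    rw [d1_unop_smul_apply]

lemma evalDD_injective : Function.Injective (evalDD (R := R) (N := N)) := by
  intro x y h
  have hz : ∀ c : N →+ QmodZ, c (x - y) = 0 := fun c => by
    have h1 : c x = c y := DFunLike.congr_fun h c
    rw [map_sub, h1, sub_self]
  have := char_ext hz
  rwa [sub_eq_zero] at this

theorem evalDD_pure (k n : ℕ) (a : Matrix (Fin k) (Fin n) Rᵐᵒᵖ) (bb : Fin k → N)
    (hx : ∃ x : Fin n → ((N →+ QmodZ) →+ QmodZ),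
      ∀ i, ∑ j, a i j • x j = evalDD (R := R) (bb i)) :
    ∃ y : Fin n → N, ∀ i, ∑ j, a i j • y j = bb i := by
  classical
  by_contra hno
  let H : AddSubgroup (Fin k → N) :=
    { carrier := {m | ∃ y : Fin n → N, ∀ i, ∑ j, a i j • y j = m i}
      add_mem' := by
        rintro m m' ⟨y, hy⟩ ⟨y', hy'⟩
        refine ⟨y + y', fun i => ?_⟩
        have h1 : ∀ j, a i j • (y + y') j = a i j • y j + a i j • y' j :=
          fun j => by rw [Pi.add_apply, smul_add]
        rw [Finset.sum_congr rfl (fun j _ => h1 j), Finset.sum_add_distrib, hy i, hy' i,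
          Pi.add_apply]
      zero_mem' := by
        refine ⟨0, fun i => ?_⟩
        rw [show ((0 : Fin k → N)) i = 0 from rfl]
        exact Finset.sum_eq_zero fun j _ => by rw [Pi.zero_apply, smul_zero]
      neg_mem' := by
        rintro m ⟨y, hy⟩
        refine ⟨-y, fun i => ?_⟩
        have h1 : ∀ j, a i j • (-y) j = -(a i j • y j) :=
          fun j => by rw [Pi.neg_apply, smul_neg]
        rw [Finset.sum_congr rfl (fun j _ => h1 j), Finset.sum_neg_distrib, hy i,
          Pi.neg_apply] }
  have hbb : bb ∉ H := fun ⟨y, hy⟩ => hno ⟨y, hy⟩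
  obtain ⟨f, hfH, hfbb⟩ := char_sep H hbb
  let g : Fin k → (N →+ QmodZ) := fun i => f.comp (AddMonoidHom.single (fun _ => N) i)
  have hzero : ∀ j, (∑ i, (a i j).unop • g i) = (0 : N →+ QmodZ) := by
    intro j
    ext y0
    rw [hom_sum_apply]
    have h1 : ∀ i, ((a i j).unop • g i) y0 = f (Pi.single i (a i j • y0)) := fun i => by
      rw [d1_unop_smul_apply]
      rfl
    rw [Finset.sum_congr rfl (fun i _ => h1 i), ← map_sum,
      Finset.univ_sum_single (f := fun i => a i j • y0)]
    have hmem : (fun i => a i j • y0) ∈ H := by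
      refine ⟨Pi.single j y0, fun i => ?_⟩
      exact sum_smul_single (fun j' => a i j') j y0
    rw [hfH _ hmem]
    rfl
  obtain ⟨x, hxx⟩ := hx
  apply hfbb
  have h2 : f bb = ∑ i, g i (bb i) := by
    conv_lhs => rw [← Finset.univ_sum_single (f := bb), map_sum]
    exact Finset.sum_congr rfl fun i _ => rfl
  rw [h2]
  have h3 : ∀ i, g i (bb i) = ∑ j, x j ((a i j).unop • g i) := by
    intro i
    have : g i (bb i) = (evalDD (R := R) (bb i)) (g i) := rfl
    rw [this, ← hxx i, hom_sum_apply]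
    exact Finset.sum_congr rfl fun j _ => rfl
  rw [Finset.sum_congr rfl (fun i _ => h3 i), Finset.sum_comm]
  refine Finset.sum_eq_zero fun j _ => ?_
  rw [← map_sum, hzero j, map_zero]

end Ev

section CatHelpers
variable {S : Type u} [Ring S] {D : Set (ModuleCat.{u} S)}

lemma pi_mem_of_definable (hD : IsDefinableClass S D)
    {α : Type u} (X : α → ModuleCat.{u} S) (hX : ∀ a, X a ∈ D) :
    ModuleCat.of S (∀ a, X a) ∈ D := by
  let c : Fan X := Fan.mk (ModuleCat.of S (∀ a, X a))
    (fun a => ModuleCat.ofHom (LinearMap.proj a : (∀ a, ↑(X a)) →ₗ[S] ↑(X a)))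
  have hlim : IsLimit c := by
    refine mkFanLimit c (fun s => ModuleCat.ofHom (LinearMap.pi (fun a => (s.proj a).hom))) (fun s j => ?_)
      (fun s m hm => ?_)
    · apply ConcreteCategory.hom_ext
      intro v
      rfl
    · apply ConcreteCategory.hom_ext
      intro v
      funext a
      exact ConcreteCategory.congr_hom (hm a) v
  exact hD.products_closed X hX c ⟨hlim⟩

lemma retracts_of_definable (hD : IsDefinableClass S D) : ClosedUnderRetracts D := by
  rintro X hX Y ⟨sm', r', hsr⟩
  let sm := sm'.hom
  let r := r'.hom
  have hsr' : ∀ y : ↑Y, r (sm y) = y := fun y => ConcreteCategory.congr_hom hsr y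
  set Ns := LinearMap.range sm with hNs
  have hpure : IsPureSubmodule S Ns := by
    rintro k n a bb ⟨x, hx⟩
    refine ⟨fun j => ⟨sm (r (x j)), LinearMap.mem_range_self _ _⟩, fun i => ?_⟩
    have h1 : ∑ j, a i j • (sm (r (x j))) = sm (r (∑ j, a i j • x j)) := by
      rw [map_sum r, map_sum sm]
      exact Finset.sum_congr rfl fun j _ => by rw [map_smul, map_smul]
    show ∑ j, a i j • (sm (r (x j))) = _
    rw [h1, hx i]
    obtain ⟨z, hz⟩ := (bb i).2
    rw [← hz, hsr' z]
  have h2 : ModuleCat.of S ↥Ns ∈ D := hD.pure_closed hX Ns hpure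
  refine hD.iso_closed h2 ⟨?_⟩
  have e : (↥Ns) ≃ₗ[S] ↑Y :=
    { toFun := fun z => r ↑z
      map_add' := fun z z' => by
        show r ↑(z + z') = r ↑z + r ↑z'
        rw [Submodule.coe_add, map_add]
      map_smul' := fun c z => by
        show r ↑(c • z) = c • r ↑z
        rw [Submodule.coe_smul, map_smul]
      invFun := fun y => ⟨sm y, LinearMap.mem_range_self _ _⟩
      left_inv := fun z => by
        apply Subtype.ext
        obtain ⟨w, hw⟩ := z.2
        show sm (r ↑z) = ↑z
        rw [← hw, hsr' w]
      right_inv := fun y => hsr' y }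
  exact e.toModuleIso

lemma finiteCoproducts_of_definable (hD : IsDefinableClass S D) :
    ClosedUnderFiniteCoproducts D := by
  rintro X Y hX hY c ⟨hc⟩
  let Z : ULift.{u} Bool → ModuleCat.{u} S := fun b =>
    Bool.rec (motive := fun _ => ModuleCat.{u} S) Y X b.down
  have hZ : ∀ b, Z b ∈ D := by
    rintro ⟨b⟩
    cases b
    · exact hY
    · exact hX
  have hpi := pi_mem_of_definable hD Z hZ
  -- the pi module is a binary coproduct of X and Y
  let inlF : ↑X →ₗ[S] (∀ b, ↑(Z b)) :=
    { toFun := fun x b => ULift.rec (fun bb => Bool.rec (motive :=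
        fun bbb => ↑(Z ⟨bbb⟩)) 0 x bb) b
      map_add' := fun x y => by
        funext b
        rcases b with ⟨b⟩
        cases b
        · show (0 : ↑Y) = 0 + 0
          rw [add_zero]
        · rfl
      map_smul' := fun cc x => by
        funext b
        rcases b with ⟨b⟩
        cases b
        · show (0 : ↑Y) = cc • 0
          rw [smul_zero]
        · rfl }
  let inrF : ↑Y →ₗ[S] (∀ b, ↑(Z b)) :=
    { toFun := fun y b => ULift.rec (fun bb => Bool.rec (motive :=
        fun bbb => ↑(Z ⟨bbb⟩)) y 0 bb) b
      map_add' := fun x y => by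
        funext b
        rcases b with ⟨b⟩
        cases b
        · rfl
        · show (0 : ↑X) = 0 + 0
          rw [add_zero]
      map_smul' := fun cc x => by
        funext b
        rcases b with ⟨b⟩
        cases b
        · rfl
        · show (0 : ↑X) = cc • 0
          rw [smul_zero] }
  let mycofan : BinaryCofan X Y := BinaryCofan.mk
    (P := ModuleCat.of S (∀ b, Z b)) (ModuleCat.ofHom inlF) (ModuleCat.ofHom inrF)
  have hsplit : ∀ p : (∀ b, ↑(Z b)), p = inlF (p ⟨true⟩) + inrF (p ⟨false⟩) := by
    intro p
    funext b
    rcases b with ⟨b⟩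
    cases b
    · show p ⟨false⟩ = 0 + p ⟨false⟩
      rw [zero_add]
    · show p ⟨true⟩ = p ⟨true⟩ + 0
      rw [add_zero]
  have hmycolim : IsColimit mycofan := by
    refine BinaryCofan.IsColimit.mk mycofan
      (fun {T} f g => ModuleCat.ofHom <|
                      { toFun := fun p => f (p ⟨true⟩) + g (p ⟨false⟩)
                        map_add' := fun p q => by
                          show f ((p + q) ⟨true⟩) + g ((p + q) ⟨false⟩) = _
                          rw [show (p+q) ⟨true⟩ = p ⟨true⟩ + q ⟨true⟩ from rfl,
                            show (p+q) ⟨false⟩ = p ⟨false⟩ + q ⟨false⟩ from rfl,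
                            map_add, map_add]
                          abel
                        map_smul' := fun cc p => by
                          show f ((cc • p) ⟨true⟩) + g ((cc • p) ⟨false⟩) = _
                          rw [show (cc • p) ⟨true⟩ = cc • (p ⟨true⟩) from rfl,
                            show (cc • p) ⟨false⟩ = cc • (p ⟨false⟩) from rfl,
                            map_smul, map_smul, ← smul_add]
                          rfl })
      (fun {T} f g => ?_) (fun {T} f g => ?_) (fun {T} f g m h1 h2 => ?_)
    · apply ConcreteCategory.hom_ext
      intro x
      show f x + g 0 = f x
      rw [map_zero, add_zero]
    · apply ConcreteCategory.hom_ext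
      intro y
      show f 0 + g y = g y
      rw [map_zero, zero_add]
    · apply ConcreteCategory.hom_ext
      intro p
      have e1 : m (inlF (p ⟨true⟩)) = f (p ⟨true⟩) := ConcreteCategory.congr_hom h1 (p ⟨true⟩)
      have e2 : m (inrF (p ⟨false⟩)) = g (p ⟨false⟩) := ConcreteCategory.congr_hom h2 (p ⟨false⟩)
      show m p = f (p ⟨true⟩) + g (p ⟨false⟩)
      calc m p = m (inlF (p ⟨true⟩) + inrF (p ⟨false⟩)) := congrArg m (hsplit p)
        _ = m (inlF (p ⟨true⟩)) + m (inrF (p ⟨false⟩)) := map_add m.hom _ _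
        _ = f (p ⟨true⟩) + g (p ⟨false⟩) := by rw [e1, e2]
  have hiso : Nonempty (ModuleCat.of S (∀ b, Z b) ≅ c.pt) :=
    ⟨IsColimit.coconePointUniqueUpToIso hmycolim hc⟩
  exact hD.iso_closed hpi hiso

end CatHelpers

section Constraints

/-- A single pp-constraint: a matrix together with a tuple of constants. -/
structure PCon (S : Type u) [Ring S] (V : Type u) [AddCommGroup V] [Module S V] : Type u where
  k : ℕ
  n : ℕ
  a : Matrix (Fin k) (Fin n) S
  b : Fin k → V

lemma sum_ite_smul {Sr V : Type*} [Ring Sr] [AddCommGroup V] [Module Sr V] {s : ℕ}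
    (i0 : Fin s) (r : Sr) (v : Fin s → V) :
    ∑ i, (if i = i0 then r else 0) • v i = r • v i0 := by
  rw [Finset.sum_eq_single i0]
  · rw [if_pos rfl]
  · intro i _ hne
    rw [if_neg hne, zero_smul]
  · intro h; exact absurd (Finset.mem_univ i0) h

lemma sum_triple_smul {Sr V : Type*} [Ring Sr] [AddCommGroup V] [Module Sr V] {s : ℕ}
    (i1 i2 i3 : Fin s) (v : Fin s → V) :
    ∑ i, ((if i = i1 then (1 : Sr) else 0) + (if i = i2 then (1 : Sr) else 0)
      - (if i = i3 then (1 : Sr) else 0)) • v i = v i1 + v i2 - v i3 := by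
  have h : ∀ i : Fin s, ((if i = i1 then (1 : Sr) else 0) + (if i = i2 then (1 : Sr) else 0)
      - (if i = i3 then (1 : Sr) else 0)) • v i
      = ((if i = i1 then (1 : Sr) else 0) • v i + (if i = i2 then (1 : Sr) else 0) • v i)
        - (if i = i3 then (1 : Sr) else 0) • v i := fun i => by
    rw [sub_smul, add_smul]
  rw [Finset.sum_congr rfl (fun i _ => h i), Finset.sum_sub_distrib, Finset.sum_add_distrib,
    sum_ite_smul, sum_ite_smul, sum_ite_smul, one_smul, one_smul, one_smul]

lemma sum_pair_smul {Sr V : Type*} [Ring Sr] [AddCommGroup V] [Module Sr V] {s : ℕ}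
    (i1 i2 : Fin s) (ρ : Sr) (v : Fin s → V) :
    ∑ i, ((if i = i1 then ρ else 0) - (if i = i2 then (1 : Sr) else 0)) • v i
      = ρ • v i1 - v i2 := by
  have h : ∀ i : Fin s, ((if i = i1 then ρ else 0) - (if i = i2 then (1 : Sr) else 0)) • v i
      = (if i = i1 then ρ else 0) • v i - (if i = i2 then (1 : Sr) else 0) • v i := fun i => by
    rw [sub_smul]
  rw [Finset.sum_congr rfl (fun i _ => h i), Finset.sum_sub_distrib,
    sum_ite_smul, sum_ite_smul, one_smul]

variable {R : Type u} [Ring R] {N : Type u} [AddCommGroup N] [Module Rᵐᵒᵖ N]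

/-- Satisfaction of a finite set of constraints by a partial realization `N⁺⁺ → N`. -/
def SatP
    (lam : Finset (PCon Rᵐᵒᵖ ((N →+ QmodZ) →+ QmodZ)) ×
      Finset (((N →+ QmodZ) →+ QmodZ) × ((N →+ QmodZ) →+ QmodZ)) ×
      Finset (Rᵐᵒᵖ × ((N →+ QmodZ) →+ QmodZ)))
    (ℓ : ((N →+ QmodZ) →+ QmodZ) → N) : Prop :=
  (∀ p ∈ lam.2.1, ℓ (p.1 + p.2) = ℓ p.1 + ℓ p.2) ∧
  (∀ p ∈ lam.2.2, ℓ (p.1 • p.2) = p.1 • ℓ p.2) ∧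
  (∀ c ∈ lam.1, (¬ ∃ x : Fin c.n → ((N →+ QmodZ) →+ QmodZ),
      ∀ i, ∑ j, c.a i j • x j = c.b i) →
    ¬ ∃ x : Fin c.n → N, ∀ i, ∑ j, c.a i j • x j = ℓ (c.b i))

lemma exists_satP
    (lam : Finset (PCon Rᵐᵒᵖ ((N →+ QmodZ) →+ QmodZ)) ×
      Finset (((N →+ QmodZ) →+ QmodZ) × ((N →+ QmodZ) →+ QmodZ)) ×
      Finset (Rᵐᵒᵖ × ((N →+ QmodZ) →+ QmodZ))) :
    ∃ ℓ : ((N →+ QmodZ) →+ QmodZ) → N, SatP (R := R) lam ℓ := by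
  classical
  set DD := ((N →+ QmodZ) →+ QmodZ) with hDD
  set Sb : Finset DD := (lam.2.1.biUnion (fun p => {p.1, p.2, p.1 + p.2}) ∪
    lam.2.2.biUnion (fun p => {p.2, p.1 • p.2})) ∪
    lam.1.biUnion (fun c => Finset.image c.b Finset.univ) with hSb
  have hmA : ∀ p ∈ lam.2.1, p.1 ∈ Sb ∧ p.2 ∈ Sb ∧ p.1 + p.2 ∈ Sb := by
    intro p hp
    refine ⟨?_, ?_, ?_⟩ <;>
      · refine Finset.mem_union_left _ (Finset.mem_union_left _ ?_)
        refine Finset.mem_biUnion.mpr ⟨p, hp, ?_⟩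
        simp
  have hmS : ∀ p ∈ lam.2.2, p.2 ∈ Sb ∧ p.1 • p.2 ∈ Sb := by
    intro p hp
    constructor <;>
      · refine Finset.mem_union_left _ (Finset.mem_union_right _ ?_)
        refine Finset.mem_biUnion.mpr ⟨p, hp, ?_⟩
        simp
  have hmC : ∀ c ∈ lam.1, ∀ i, c.b i ∈ Sb := by
    intro c hc i
    refine Finset.mem_union_right _ ?_
    refine Finset.mem_biUnion.mpr ⟨c, hc, ?_⟩
    exact Finset.mem_image.mpr ⟨i, Finset.mem_univ i, rfl⟩
  set s := Sb.card with hs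
  set en := Sb.equivFin with hen
  set bb : Fin s → DD := fun i => (en.symm i).1 with hbbdef
  have hbb : ∀ (φ : DD) (h : φ ∈ Sb), bb (en ⟨φ, h⟩) = φ := by
    intro φ h
    show ((en.symm (en ⟨φ, h⟩)) : DD) = φ
    rw [Equiv.symm_apply_apply]
  -- index maps
  let i1 : {p // p ∈ lam.2.1} → Fin s := fun p => en ⟨p.1.1, (hmA p.1 p.2).1⟩
  let i2 : {p // p ∈ lam.2.1} → Fin s := fun p => en ⟨p.1.2, (hmA p.1 p.2).2.1⟩
  let i3 : {p // p ∈ lam.2.1} → Fin s := fun p => en ⟨p.1.1 + p.1.2, (hmA p.1 p.2).2.2⟩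
  let j1 : {p // p ∈ lam.2.2} → Fin s := fun p => en ⟨p.1.2, (hmS p.1 p.2).1⟩
  let j2 : {p // p ∈ lam.2.2} → Fin s := fun p => en ⟨p.1.1 • p.1.2, (hmS p.1 p.2).2⟩
  let ι := ({p // p ∈ lam.2.1}) ⊕ ({p // p ∈ lam.2.2})
  let cE : ι → Fin s → Rᵐᵒᵖ := Sum.elim
    (fun p i => (if i = i1 p then (1 : Rᵐᵒᵖ) else 0) + (if i = i2 p then (1 : Rᵐᵒᵖ) else 0)
      - (if i = i3 p then (1 : Rᵐᵒᵖ) else 0))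
    (fun p i => (if i = j1 p then p.1.1 else 0) - (if i = j2 p then (1 : Rᵐᵒᵖ) else 0))
  have hE : ∀ e : ι, ∑ i, cE e i • bb i = 0 := by
    rintro (p | p)
    · have h0 : ∑ i, cE (Sum.inl p) i • bb i
          = ∑ i, ((if i = i1 p then (1 : Rᵐᵒᵖ) else 0) + (if i = i2 p then (1 : Rᵐᵒᵖ) else 0)
            - (if i = i3 p then (1 : Rᵐᵒᵖ) else 0)) • bb i := rfl
      rw [h0, sum_triple_smul]
      have e1 : bb (i1 p) = p.1.1 := hbb _ _
      have e2 : bb (i2 p) = p.1.2 := hbb _ _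
      have e3 : bb (i3 p) = p.1.1 + p.1.2 := hbb _ _
      rw [e1, e2, e3]
      exact sub_self _
    · have h0 : ∑ i, cE (Sum.inr p) i • bb i
          = ∑ i, ((if i = j1 p then p.1.1 else 0)
            - (if i = j2 p then (1 : Rᵐᵒᵖ) else 0)) • bb i := rfl
      rw [h0, sum_pair_smul]
      have e1 : bb (j1 p) = p.1.2 := hbb _ _
      have e2 : bb (j2 p) = p.1.1 • p.1.2 := hbb _ _
      rw [e1, e2]
      exact sub_self _
  -- constraint index
  let τ := {c : {q // q ∈ lam.1} //
    ¬ ∃ x : Fin c.1.n → DD, ∀ i, ∑ j, c.1.a i j • x j = c.1.b i}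
  have hT : ∀ t : τ, ¬ ∃ x : Fin t.1.1.n → DD,
      ∀ i, ∑ j, t.1.1.a i j • x j = bb (en ⟨t.1.1.b i, hmC t.1.1 t.1.2 i⟩) := by
    rintro t ⟨x, hx⟩
    exact t.2 ⟨x, fun i => by rw [← hbb (t.1.1.b i) (hmC t.1.1 t.1.2 i)]; exact hx i⟩
  obtain ⟨m, hm1, hm2⟩ := key_realization (R := R) (N := N) s bb cE hE
    (fun t : τ => t.1.1.k) (fun t => t.1.1.n) (fun t => t.1.1.a)
    (fun t i => en ⟨t.1.1.b i, hmC t.1.1 t.1.2 i⟩) hT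
  refine ⟨fun φ => if h : φ ∈ Sb then m (en ⟨φ, h⟩) else 0, ?_, ?_, ?_⟩
  · intro p hp
    obtain ⟨h1, h2, h3⟩ := hmA p hp
    dsimp only
    rw [dif_pos h3, dif_pos h1, dif_pos h2]
    have h0 : ∑ i, ((if i = i1 ⟨p, hp⟩ then (1 : Rᵐᵒᵖ) else 0)
        + (if i = i2 ⟨p, hp⟩ then (1 : Rᵐᵒᵖ) else 0)
        - (if i = i3 ⟨p, hp⟩ then (1 : Rᵐᵒᵖ) else 0)) • m i = 0 := hm1 (Sum.inl ⟨p, hp⟩)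
    rw [sum_triple_smul] at h0
    exact (sub_eq_zero.mp h0).symm
  · intro p hp
    obtain ⟨h1, h2⟩ := hmS p hp
    dsimp only
    rw [dif_pos h2, dif_pos h1]
    have h0 : ∑ i, ((if i = j1 ⟨p, hp⟩ then p.1 else 0)
        - (if i = j2 ⟨p, hp⟩ then (1 : Rᵐᵒᵖ) else 0)) • m i = 0 := hm1 (Sum.inr ⟨p, hp⟩)
    rw [sum_pair_smul] at h0
    exact (sub_eq_zero.mp h0).symm
  · intro c hc hguard
    rintro ⟨x, hx⟩
    have := hm2 ⟨⟨c, hc⟩, hguard⟩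
    refine this ⟨x, fun i => ?_⟩
    have hval : (if h : c.b i ∈ Sb then m (en ⟨c.b i, h⟩) else 0)
        = m (en ⟨c.b i, hmC c hc i⟩) := dif_pos (hmC c hc i)
    rw [← hval]
    exact hx i


end Constraints

section DoubleDual
open CategoryTheory CategoryTheory.Limits
set_option maxHeartbeats 1000000
set_option synthInstance.maxHeartbeats 400000

/-- The double character dual of a module in a definable class stays in the class. -/
theorem double_dual_mem (R : Type u) [Ring R] {B : Set (ModuleCat.{u} Rᵐᵒᵖ)}
    (hB : IsDefinableClass Rᵐᵒᵖ B) {N : ModuleCat.{u} Rᵐᵒᵖ} (hN : N ∈ B) :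
    charDualL R (charDualR R N) ∈ B := by
  classical
  show ModuleCat.of Rᵐᵒᵖ ((↑N →+ QmodZ) →+ QmodZ) ∈ B
  -- the directed index "poset" of finite constraint sets
  let Lam : Type u := Finset (PCon Rᵐᵒᵖ ((↑N →+ QmodZ) →+ QmodZ)) ×
      Finset (((↑N →+ QmodZ) →+ QmodZ) × ((↑N →+ QmodZ) →+ QmodZ)) ×
      Finset (Rᵐᵒᵖ × ((↑N →+ QmodZ) →+ QmodZ))
  letI : SmallCategory Lam := Preorder.smallCategory Lam
  -- choose approximate realizations
  choose ℓ hℓ using fun lam : Lam => exists_satP (R := R) (N := ↑N) lam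
  -- the ideal of eventually-zero families
  let Zsub : Submodule Rᵐᵒᵖ (Lam → ↑N) :=
    { carrier := {x | ∃ lam : Lam, ∀ μ, lam ≤ μ → x μ = 0}
      add_mem' := by
        rintro x y ⟨a, ha⟩ ⟨b, hb⟩
        exact ⟨a ⊔ b, fun μ hμ => by
          rw [Pi.add_apply, ha μ (le_trans le_sup_left hμ), hb μ (le_trans le_sup_right hμ),
            add_zero]⟩
      zero_mem' := ⟨Classical.arbitrary Lam, fun μ _ => rfl⟩
      smul_mem' := by
        rintro c x ⟨a, ha⟩
        exact ⟨a, fun μ hμ => by rw [Pi.smul_apply, ha μ hμ, smul_zero]⟩ }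
  -- the filtered diagram of products
  let F : Lam ⥤ ModuleCat.{u} Rᵐᵒᵖ :=
    { obj := fun lam => ModuleCat.of Rᵐᵒᵖ ({μ : Lam // lam ≤ μ} → ↑N)
      map := fun {lam lam'} h => ModuleCat.ofHom <| LinearMap.funLeft Rᵐᵒᵖ ↑N
        (fun μ : {μ : Lam // lam' ≤ μ} => ⟨μ.1, le_trans (leOfHom h) μ.2⟩)
      map_id := fun lam => rfl
      map_comp := fun {l1 l2 l3} f g => rfl }
  let CM : ModuleCat.{u} Rᵐᵒᵖ := ModuleCat.of Rᵐᵒᵖ ((Lam → ↑N) ⧸ Zsub)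
  let ext0 : ∀ lam : Lam, ({μ : Lam // lam ≤ μ} → ↑N) →ₗ[Rᵐᵒᵖ] (Lam → ↑N) := fun lam =>
    { toFun := fun y μ => if h : lam ≤ μ then y ⟨μ, h⟩ else 0
      map_add' := fun y y' => by
        funext μ
        by_cases h : lam ≤ μ
        · simp only [Pi.add_apply]
          rw [dif_pos h, dif_pos h, dif_pos h]
        · simp only [Pi.add_apply]
          rw [dif_neg h, dif_neg h, dif_neg h, add_zero]
      map_smul' := fun c y => by
        funext μ
        by_cases h : lam ≤ μ
        · simp only [Pi.smul_apply, RingHom.id_apply]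
          rw [dif_pos h, dif_pos h]
        · simp only [Pi.smul_apply, RingHom.id_apply]
          rw [dif_neg h, dif_neg h, smul_zero] }
  let coc : Cocone F :=
    { pt := CM
      ι := { app := fun lam => (ModuleCat.ofHom (Zsub.mkQ.comp (ext0 lam)) : F.obj lam ⟶ CM)
             naturality := fun lam lam' h => by
               apply ConcreteCategory.hom_ext
               intro y
               show Zsub.mkQ (ext0 lam' (F.map h y)) = Zsub.mkQ (ext0 lam y)
               rw [Submodule.mkQ_apply, Submodule.mkQ_apply, Submodule.Quotient.eq]
               refine ⟨lam', fun μ hμ => ?_⟩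
               have h1 : lam ≤ μ := le_trans (leOfHom h) hμ
               rw [Pi.sub_apply]
               show (if h' : lam' ≤ μ then (F.map h y) ⟨μ, h'⟩ else 0)
                 - (if h' : lam ≤ μ then y ⟨μ, h'⟩ else 0) = 0
               rw [dif_pos hμ, dif_pos h1]
               exact sub_self _ } }
  let resBot : (Lam → ↑N) →ₗ[Rᵐᵒᵖ] ({μ : Lam // (⊥ : Lam) ≤ μ} → ↑N) :=
    LinearMap.funLeft Rᵐᵒᵖ ↑N (fun μ : {μ : Lam // (⊥ : Lam) ≤ μ} => μ.1)
  have hbotnat : ∀ (s : Cocone F) (lam : Lam) (z : {μ : Lam // (⊥ : Lam) ≤ μ} → ↑N),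
      s.ι.app ⊥ z = s.ι.app lam (F.map (homOfLE bot_le) z) := by
    intro s lam z
    have := s.ι.naturality (homOfLE (bot_le : (⊥ : Lam) ≤ lam))
    have h2 := ConcreteCategory.congr_hom this z
    exact h2.symm
  have hkills : ∀ (s : Cocone F), ∀ x ∈ Zsub, (s.ι.app ⊥).hom.comp resBot x = 0 := by
    rintro s x ⟨lam, hlam⟩
    show s.ι.app ⊥ (resBot x) = 0
    rw [hbotnat s lam (resBot x)]
    have h1 : F.map (homOfLE (bot_le : (⊥ : Lam) ≤ lam)) (resBot x) = 0 := by
      funext μ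
      exact hlam μ.1 μ.2
    rw [h1, map_zero]
  have hcolim : IsColimit coc := by
    refine { desc := fun s => ModuleCat.ofHom <| Zsub.liftQ ((s.ι.app ⊥).hom.comp resBot) (fun x hx => hkills s x hx)
             fac := fun s lam => ?_
             uniq := fun s m hm => ?_ }
    · apply ConcreteCategory.hom_ext
      intro y
      show Zsub.liftQ ((s.ι.app ⊥).hom.comp resBot) (fun x hx => hkills s x hx)
        (Zsub.mkQ (ext0 lam y)) = s.ι.app lam y
      rw [Submodule.mkQ_apply]
      show s.ι.app ⊥ (resBot (ext0 lam y)) = s.ι.app lam y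
      rw [hbotnat s lam (resBot (ext0 lam y))]
      congr 1
      funext μ
      show (if h : lam ≤ μ.1 then y ⟨μ.1, h⟩ else 0) = y μ
      rw [dif_pos μ.2]
    · apply ConcreteCategory.hom_ext
      intro q
      obtain ⟨x, rfl⟩ := Submodule.Quotient.mk_surjective Zsub q
      have h1 : Submodule.Quotient.mk (p := Zsub) x = coc.ι.app ⊥ (resBot x) := by
        show _ = Zsub.mkQ (ext0 ⊥ (resBot x))
        rw [Submodule.mkQ_apply]
        congr 1
      rw [h1]
      have h2 : m ((coc.ι.app ⊥) (resBot x)) = s.ι.app ⊥ (resBot x) :=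
        ConcreteCategory.congr_hom (hm ⊥) (resBot x)
      rw [h2, ← h1]
      exact (Submodule.liftQ_apply Zsub ((s.ι.app ⊥).hom.comp resBot) x).symm
  have hobjs : ∀ lam : Lam, F.obj lam ∈ B :=
    fun lam => pi_mem_of_definable hB (fun _ : {μ : Lam // lam ≤ μ} => N) (fun _ => hN)
  have hC : CM ∈ B := hB.dirlim_closed Lam F coc ⟨hcolim⟩ hobjs
  -- the pure embedding of N⁺⁺ into CM
  let Φ : ((↑N →+ QmodZ) →+ QmodZ) →ₗ[Rᵐᵒᵖ] ((Lam → ↑N) ⧸ Zsub) :=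
    { toFun := fun φ => Submodule.Quotient.mk (fun μ => ℓ μ φ)
      map_add' := fun φ ψ => by
        rw [← Submodule.Quotient.mk_add, Submodule.Quotient.eq]
        refine ⟨((∅ : Finset _), ({(φ, ψ)} : Finset _), (∅ : Finset _)), fun μ hμ => ?_⟩
        have hmem : (φ, ψ) ∈ μ.2.1 := hμ.2.1 (Finset.mem_singleton_self _)
        rw [Pi.sub_apply, Pi.add_apply, (hℓ μ).1 (φ, ψ) hmem]
        exact sub_self _
      map_smul' := fun ρ φ => by
        rw [RingHom.id_apply, ← Submodule.Quotient.mk_smul, Submodule.Quotient.eq]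
        refine ⟨((∅ : Finset _), (∅ : Finset _), ({(ρ, φ)} : Finset _)), fun μ hμ => ?_⟩
        have hmem : (ρ, φ) ∈ μ.2.2 := hμ.2.2 (Finset.mem_singleton_self _)
        rw [Pi.sub_apply, Pi.smul_apply, (hℓ μ).2.1 (ρ, φ) hmem]
        exact sub_self _ }
  have hinj : Function.Injective Φ := by
    intro φ ψ hfp
    rw [← sub_eq_zero]
    by_contra hne
    have h0 : Φ (φ - ψ) = 0 := by rw [map_sub, hfp, sub_self]
    have h1 : (fun μ => ℓ μ (φ - ψ)) ∈ Zsub := by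
      rwa [show Φ (φ - ψ) = Submodule.Quotient.mk (fun μ => ℓ μ (φ - ψ)) from rfl,
        Submodule.Quotient.mk_eq_zero] at h0
    obtain ⟨lam1, hlam1⟩ := h1
    set χ := φ - ψ with hχ
    let c0 : PCon Rᵐᵒᵖ ((↑N →+ QmodZ) →+ QmodZ) :=
      ⟨1, 0, fun _ j => j.elim0, fun _ => χ⟩
    have hguard : ¬ ∃ x : Fin c0.n → ((↑N →+ QmodZ) →+ QmodZ),
        ∀ i, ∑ j, c0.a i j • x j = c0.b i := by
      rintro ⟨x, hx⟩
      have h5 := hx 0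
      rw [Finset.univ_eq_empty, Finset.sum_empty] at h5
      exact hne h5.symm
    set μ : Lam := lam1 ⊔ (({c0} : Finset _), (∅ : Finset _), (∅ : Finset _)) with hμdef
    have hc0 : c0 ∈ μ.1 :=
      (le_sup_right : (({c0} : Finset _), (∅ : Finset _), (∅ : Finset _)) ≤ μ).1
        (Finset.mem_singleton_self _)
    have hnosol := (hℓ μ).2.2 c0 hc0 hguard
    apply hnosol
    refine ⟨fun j => j.elim0, fun i => ?_⟩
    have hval : ℓ μ (c0.b i) = 0 := hlam1 μ le_sup_left
    rw [hval, Finset.univ_eq_empty, Finset.sum_empty]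
  let Psub : Submodule Rᵐᵒᵖ ((Lam → ↑N) ⧸ Zsub) := LinearMap.range Φ
  have hpure : IsPureSubmodule Rᵐᵒᵖ Psub := by
    rintro k n a bt ⟨x, hx⟩
    have hβ : ∀ i, ∃ φ, Φ φ = ↑(bt i) := fun i => (bt i).2
    choose β hβ using hβ
    have hξ : ∀ j, ∃ ξ : Lam → ↑N, Submodule.Quotient.mk ξ = x j := fun j =>
      Submodule.Quotient.mk_surjective _ (x j)
    choose ξ hξ using hξ
    have heq : ∀ i, ∃ lam : Lam, ∀ μ, lam ≤ μ → (∑ j, a i j • ξ j) μ - ℓ μ (β i) = 0 := by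
      intro i
      have h1 : Submodule.Quotient.mk (p := Zsub) (∑ j, a i j • ξ j)
          = Submodule.Quotient.mk (fun μ => ℓ μ (β i)) := by
        have h2 : Submodule.Quotient.mk (p := Zsub) (∑ j, a i j • ξ j)
            = ∑ j, a i j • x j := by
          rw [← Submodule.mkQ_apply, map_sum]
          refine Finset.sum_congr rfl fun j _ => ?_
          rw [map_smul, Submodule.mkQ_apply, hξ j]
        rw [h2, hx i, ← hβ i]
        rfl
      exact Submodule.Quotient.eq Zsub |>.mp h1 |>.imp fun lam hlam => fun μ hμ => by
        have := hlam μ hμ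
        rwa [Pi.sub_apply] at this
    choose lami hlami using heq
    by_cases hsolv : ∃ xs : Fin n → ((↑N →+ QmodZ) →+ QmodZ),
        ∀ i, ∑ j, a i j • xs j = β i
    · obtain ⟨xs, hxs⟩ := hsolv
      refine ⟨fun j => ⟨Φ (xs j), LinearMap.mem_range_self _ _⟩, fun i => ?_⟩
      show ∑ j, a i j • (Φ (xs j)) = ↑(bt i)
      rw [← hβ i, ← hxs i, map_sum]
      exact Finset.sum_congr rfl fun j _ => (map_smul Φ _ _).symm
    · exfalso
      let c1 : PCon Rᵐᵒᵖ ((↑N →+ QmodZ) →+ QmodZ) := ⟨k, n, a, β⟩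
      set lamS : Lam := (Finset.univ : Finset (Fin k)).sup lami with hlamS
      set μ : Lam := lamS ⊔ (({c1} : Finset _), (∅ : Finset _), (∅ : Finset _)) with hμdef
      have hc1 : c1 ∈ μ.1 :=
        (le_sup_right : (({c1} : Finset _), (∅ : Finset _), (∅ : Finset _)) ≤ μ).1
          (Finset.mem_singleton_self _)
      have hnosol := (hℓ μ).2.2 c1 hc1 hsolv
      apply hnosol
      refine ⟨fun j => ξ j μ, fun i => ?_⟩
      have h2 := hlami i μ (le_trans (Finset.le_sup (Finset.mem_univ i)) le_sup_left)
      have h3 : (∑ j, a i j • ξ j) μ = ∑ j, a i j • (ξ j μ) := by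
        rw [Finset.sum_apply]
        exact Finset.sum_congr rfl fun j _ => rfl
      rw [← h3]
      rw [sub_eq_zero] at h2
      exact h2
  have hPmem : ModuleCat.of Rᵐᵒᵖ ↥Psub ∈ B := hB.pure_closed hC Psub hpure
  refine hB.iso_closed hPmem ⟨?_⟩
  exact ((LinearEquiv.ofInjective Φ hinj).symm.toModuleIso :
    ModuleCat.of Rᵐᵒᵖ ↥(LinearMap.range Φ) ≅
      ModuleCat.of Rᵐᵒᵖ ((↑N →+ QmodZ) →+ QmodZ))

/-- If the double character dual of `N` is in a definable class, then so is `N`. -/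
theorem mem_of_ddual_mem (R : Type u) [Ring R] {B : Set (ModuleCat.{u} Rᵐᵒᵖ)}
    (hB : IsDefinableClass Rᵐᵒᵖ B) {N : ModuleCat.{u} Rᵐᵒᵖ}
    (h2 : charDualL R (charDualR R N) ∈ B) : N ∈ B := by
  classical
  let ev : ↑N →ₗ[Rᵐᵒᵖ] ((↑N →+ QmodZ) →+ QmodZ) := evalDD (R := R) (N := ↑N)
  have hpure : IsPureSubmodule Rᵐᵒᵖ (LinearMap.range ev) := by
    rintro k n a bt ⟨x, hx⟩
    have hβ : ∀ i, ∃ y, ev y = ↑(bt i) := fun i => (bt i).2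
    choose β hβ using hβ
    have hsolv : ∃ y : Fin n → ↑N, ∀ i, ∑ j, a i j • y j = β i := by
      refine evalDD_pure (R := R) k n a β ⟨x, fun i => ?_⟩
      rw [hx i, ← hβ i]
    obtain ⟨y, hy⟩ := hsolv
    refine ⟨fun j => ⟨ev (y j), LinearMap.mem_range_self _ _⟩, fun i => ?_⟩
    show ∑ j, a i j • (ev (y j)) = ↑(bt i)
    rw [← hβ i, ← hy i, map_sum]
    exact Finset.sum_congr rfl fun j _ => (map_smul ev _ _).symm
  have h3 := hB.pure_closed h2 (LinearMap.range ev) hpure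
  refine hB.iso_closed h3 ⟨?_⟩
  exact ((LinearEquiv.ofInjective ev (evalDD_injective (R := R))).symm.toModuleIso :
    ModuleCat.of Rᵐᵒᵖ ↥(LinearMap.range ev) ≅ ModuleCat.of Rᵐᵒᵖ ↑N)

end DoubleDual


/-- Let `R` be a ring and `(A, B)` a duality pair (with respect to the
character dual) such that both `A ⊆ Mod-R` and `B ⊆ Mod-R°` are definable. Then
`A = B^d`, `B = A^d`, and the duality pair is symmetric. -/
theorem definable_duality_pair_symmetric (R : Type u) [Ring R]
    (A : Set (ModuleCat.{u} R)) (B : Set (ModuleCat.{u} Rᵐᵒᵖ))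
    (hAB : IsModDualityPair (charDualL R) A B)
    (hA : IsDefinableClass R A) (hB : IsDefinableClass Rᵐᵒᵖ B) :
    A = dualDefinableR R B ∧ B = dualDefinableL R A ∧
      IsModSymmetricDualityPair R A B := by
  have hBA : ∀ Nn : ModuleCat.{u} Rᵐᵒᵖ, Nn ∈ B ↔ charDualR R Nn ∈ A := by
    intro Nn
    constructor
    · intro h
      exact (hAB.1 (charDualR R Nn)).mpr (double_dual_mem R hB h)
    · intro h
      exact mem_of_ddual_mem R hB ((hAB.1 (charDualR R Nn)).mp h)
  exact ⟨Set.ext fun M => hAB.1 M, Set.ext fun Nn => hBA Nn,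
    hAB, ⟨fun Nn => hBA Nn, ⟨finiteCoproducts_of_definable hA, retracts_of_definable hA⟩⟩⟩

end Paper
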